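/- There is an absolute constant C > 0 such that for all positive integers n, k, d, d₀ with d₀ ≤ d and all reals ε > 0, δ > 0, there exists a one-query ((3d₀+5)ε, δ′)-steward for k adaptively chosen (ε,δ)-concentrated functions f : {0,1}^n → ℝ^d with randomness complexity exactly n, where δ′ = 2^{C·k·d·log₂(d₀+1)/d₀}·δ. -/

import Mathlib

/-!
The steward queries its random seed `Z` itself in every round and returns the answer `W`
rounded coordinatewise to a grid of mesh `2ε(d₀+1)`. The coordinates are grouped into blocks
of `d₀`, and each block is rounded on one of the `d₀+1` shifts of the grid, chosen so that no
coordinate of the block lies within `2ε` above a grid point: the block occupies at most `d₀` of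
the `d₀+1` cell labels. Then every `W` within `ε` of `μ` rounds to a value determined by `μ`
and the vector of shifts. So as long as no function has deviated at `Z`, the responses form one
of at most `((d₀+1)^(d/d₀+1))^i` histories fixed in advance by the owner, and a union bound over
these histories, each of which lets the next function deviate with probability at most `δ`,
bounds the failure probability by `2^(2kd·log₂(d₀+1)/d₀)·δ`. The rounding error is at most
`ε + 2ε(d₀+1)`.
-/

open Classical

/-- Probability of `P` under the uniform distribution on a finite type. -/
noncomputable def pr {α : Type*} [Fintype α] (P : α → Prop) : ℝ :=
  ((Finset.univ.filter P).card : ℝ) / (Fintype.card α : ℝ)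

/-- `f : {0,1}^n → ℝ^d` is `(ε,δ)`-concentrated at `μ`. -/
def Concentrated (n d : ℕ) (ε δ : ℝ)
    (f : (Fin n → Bool) → Fin d → ℝ) (μ : Fin d → ℝ) : Prop :=
  pr (fun X : Fin n → Bool => ∃ j, |f X j - μ j| > ε) ≤ δ

/-- A deterministic owner for `k` rounds of `(ε,δ)`-concentrated functions
`{0,1}^n → ℝ^d`: given the history of responses `Y_1,…,Y_{i-1}`, it produces
a function `f_i` together with a point `μ_i` at which `f_i` is concentrated. -/
structure Owner (n k d : ℕ) (ε δ : ℝ) where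
  act : List (Fin d → ℝ) → (((Fin n → Bool) → Fin d → ℝ) × (Fin d → ℝ))
  conc : ∀ ys : List (Fin d → ℝ), ys.length < k →
    Concentrated n d ε δ (act ys).1 (act ys).2

/-- A one-query steward with randomness complexity `m`: in each round it chooses
a query point from its randomness and the past query answers, and it chooses a
response from its randomness and the past and current query answers. -/
structure Steward (n k d m : ℕ) where
  q : (Fin m → Bool) → List (Fin d → ℝ) → (Fin n → Bool)
  r : (Fin m → Bool) → List (Fin d → ℝ) → (Fin d → ℝ) → (Fin d → ℝ)

/-- The interaction `O ↔ S(Z)` for `i` rounds: the list of triples `(Y_i, W_i, μ_i)`. -/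
noncomputable def run {n k d m : ℕ} {ε δ : ℝ} (O : Owner n k d ε δ) (S : Steward n k d m)
    (Z : Fin m → Bool) : ℕ → List ((Fin d → ℝ) × (Fin d → ℝ) × (Fin d → ℝ))
  | 0 => []
  | i + 1 =>
    let h := run O S Z i
    let fμ := O.act (h.map fun p => p.1)
    let X := S.q Z (h.map fun p => p.2.1)
    let W := fμ.1 X
    h ++ [(S.r Z (h.map fun p => p.2.1) W, W, fμ.2)]

/-- `S` is a one-query `(ε',δ')`-steward for `k` adaptively chosen
`(ε,δ)`-concentrated functions `{0,1}^n → ℝ^d`. -/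
def IsSteward (n k d m : ℕ) (ε δ ε' δ' : ℝ) (S : Steward n k d m) : Prop :=
  ∀ O : Owner n k d ε δ,
    pr (fun Z : Fin m → Bool =>
      ∃ p ∈ run O S Z k, ∃ j : Fin d, |p.1 j - p.2.2 j| > ε') ≤ δ'

section UniformProbability

variable {α : Type*} [Fintype α]

lemma pr_mono {P Q : α → Prop} (h : ∀ x, P x → Q x) : pr P ≤ pr Q := by
  unfold pr
  gcongr ?_ / _
  exact_mod_cast Finset.card_le_card fun x hx => by simp_all

lemma pr_exists_le_sum {ι : Type*} (s : Finset ι) (P : ι → α → Prop) :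
    pr (fun x => ∃ i ∈ s, P i x) ≤ ∑ i ∈ s, pr (P i) := by
  unfold pr
  rw [← Finset.sum_div]
  gcongr ?_ / _
  refine (Nat.cast_le.2 (Finset.card_le_card (t := s.biUnion fun i => Finset.univ.filter (P i))
    fun x hx => by simpa using hx)).trans ?_
  exact_mod_cast Finset.card_biUnion_le

end UniformProbability

section GridFloor

variable {L : ℝ}

noncomputable def gridFloor (L a x : ℝ) : ℝ := a + L * ⌊(x - a) / L⌋

lemma gridFloor_le (hL : 0 < L) (a x : ℝ) : gridFloor L a x ≤ x := by
  have := Int.floor_le ((x - a) / L)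
  unfold gridFloor
  nlinarith [mul_div_cancel₀ (x - a) hL.ne']

lemma lt_gridFloor_add (hL : 0 < L) (a x : ℝ) : x < gridFloor L a x + L := by
  have := Int.lt_floor_add_one ((x - a) / L)
  unfold gridFloor
  nlinarith [mul_div_cancel₀ (x - a) hL.ne']

lemma gridFloor_mono (hL : 0 < L) (a : ℝ) : Monotone (gridFloor L a) := by
  intro x y hxy
  unfold gridFloor
  gcongr

lemma gridFloor_eq_of_le_add (hL : 0 < L) {a c x x' : ℝ} (hxx' : x ≤ x') (hx' : x' ≤ x + c)
    (hfar : gridFloor L a x' + c ≤ x') : gridFloor L a x' = gridFloor L a x := by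
  refine le_antisymm ?_ (gridFloor_mono hL a hxx')
  by_contra hlt
  have hstep : gridFloor L a x + L ≤ gridFloor L a x' := by
    have hq : ⌊(x - a) / L⌋ < ⌊(x' - a) / L⌋ := by
      by_contra hq
      have : (⌊(x' - a) / L⌋ : ℝ) ≤ ⌊(x - a) / L⌋ := by exact_mod_cast not_lt.1 hq
      unfold gridFloor at hlt
      nlinarith
    have : (⌊(x - a) / L⌋ : ℝ) + 1 ≤ ⌊(x' - a) / L⌋ := by exact_mod_cast hq
    unfold gridFloor
    nlinarith
  linarith [lt_gridFloor_add hL a x]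

end GridFloor

section ShiftedGrid

variable {d₀ : ℕ} {ε : ℝ}

/-- The real line is cut into cells `[2εm, 2ε(m+1))`, labelled by `m mod (d₀+1)`. The shift-`s`
grid `2εs + 2ε(d₀+1)ℤ` consists of the left endpoints of the cells labelled `s`. -/
noncomputable def cellLabel (d₀ : ℕ) (ε x : ℝ) : ZMod (d₀ + 1) := ⌊x / (2 * ε)⌋

noncomputable def shiftedFloor (d₀ : ℕ) (ε : ℝ) (s : ZMod (d₀ + 1)) (x : ℝ) : ℝ :=
  gridFloor (2 * ε * (d₀ + 1)) (2 * ε * s.val) x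

lemma cellLabel_eq_of_lt_shiftedFloor_add (hε : 0 < ε) {s : ZMod (d₀ + 1)} {x : ℝ}
    (h : x < shiftedFloor d₀ ε s x + 2 * ε) : cellLabel d₀ ε x = s := by
  set q := ⌊(x - 2 * ε * s.val) / (2 * ε * (d₀ + 1))⌋
  have hle := gridFloor_le (by positivity : 0 < 2 * ε * (d₀ + 1)) (2 * ε * s.val) x
  have hfloor : ⌊x / (2 * ε)⌋ = s.val + (d₀ + 1) * q := by
    rw [Int.floor_eq_iff, le_div_iff₀ (by positivity), div_lt_iff₀ (by positivity)]
    unfold shiftedFloor gridFloor at h hle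
    push_cast
    constructor <;> nlinarith
  unfold cellLabel
  rw [hfloor]
  have hzero : (d₀ : ZMod (d₀ + 1)) + 1 = 0 := by exact_mod_cast ZMod.natCast_self (d₀ + 1)
  push_cast
  rw [hzero, zero_mul, add_zero, ZMod.natCast_zmod_val]

lemma shiftedFloor_add_le_of_cellLabel_ne (hε : 0 < ε) {s : ZMod (d₀ + 1)} {x : ℝ}
    (h : cellLabel d₀ ε x ≠ s) : shiftedFloor d₀ ε s x + 2 * ε ≤ x := by
  contrapose! h
  exact cellLabel_eq_of_lt_shiftedFloor_add hε h

lemma shiftedFloor_eq_of_cellLabel_ne (hε : 0 < ε) {s : ZMod (d₀ + 1)} {x x' μ : ℝ}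
    (hx : |x - μ| ≤ ε) (hx' : |x' - μ| ≤ ε) (h : cellLabel d₀ ε x ≠ s)
    (h' : cellLabel d₀ ε x' ≠ s) : shiftedFloor d₀ ε s x = shiftedFloor d₀ ε s x' := by
  have hL : 0 < 2 * ε * (d₀ + 1) := by positivity
  rw [abs_le] at hx hx'
  rcases le_total x x' with hxx' | hx'x
  · exact (gridFloor_eq_of_le_add hL hxx' (by linarith)
      (shiftedFloor_add_le_of_cellLabel_ne hε h')).symm
  · exact gridFloor_eq_of_le_add hL hx'x (by linarith) (shiftedFloor_add_le_of_cellLabel_ne hε h)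

lemma abs_shiftedFloor_sub_le (hε : 0 < ε) (s : ZMod (d₀ + 1)) {x μ : ℝ} (hx : |x - μ| ≤ ε) :
    |shiftedFloor d₀ ε s x - μ| ≤ (2 * d₀ + 3) * ε := by
  have hL : 0 < 2 * ε * (d₀ + 1) := by positivity
  have h1 := gridFloor_le hL (2 * ε * s.val) x
  have h2 := lt_gridFloor_add hL (2 * ε * s.val) x
  unfold shiftedFloor
  rw [abs_le] at hx ⊢
  constructor <;> nlinarith

end ShiftedGrid

lemma exists_finset_card_le_of_factorsThrough {α γ F : Type*} [Fintype F] {S : Set α}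
    (c : α → F) (R : α → γ) (h : ∀ w ∈ S, ∀ w' ∈ S, c w = c w' → R w = R w') :
    ∃ C : Finset γ, C.card ≤ Fintype.card F ∧ R '' S ⊆ C := by
  refine ⟨Finset.univ.image fun σ : {σ // ∃ w ∈ S, c w = σ} => R σ.2.choose,
    Finset.card_image_le.trans (Fintype.card_subtype_le _), ?_⟩
  rintro _ ⟨w, hw, rfl⟩
  have hσ : ∃ w' ∈ S, c w' = c w := ⟨w, hw, rfl⟩
  simp only [Finset.coe_image, Finset.coe_univ, Set.image_univ]
  exact ⟨⟨c w, hσ⟩, h _ hσ.choose_spec.1 _ hw hσ.choose_spec.2⟩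

section BlockRounding

variable {ι β : Type*} (d₀ : ℕ) (ε : ℝ) (blk : ι → β)

def IsFreeShift (w : ι → ℝ) (b : β) (s : ZMod (d₀ + 1)) : Prop :=
  ∀ i, blk i = b → cellLabel d₀ ε (w i) ≠ s

noncomputable def blockShift (w : ι → ℝ) (b : β) : ZMod (d₀ + 1) :=
  Classical.epsilon (IsFreeShift d₀ ε blk w b)

noncomputable def blockRound (w : ι → ℝ) : ι → ℝ :=
  fun i => shiftedFloor d₀ ε (blockShift d₀ ε blk w (blk i)) (w i)

variable {d₀ ε blk}

lemma exists_isFreeShift [Fintype ι] [DecidableEq β] {b : β}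
    (hb : (Finset.univ.filter (blk · = b)).card ≤ d₀) (w : ι → ℝ) :
    ∃ s, IsFreeShift d₀ ε blk w b s := by
  obtain ⟨s, -, hs⟩ := Finset.exists_mem_notMem_of_card_lt_card
    (s := (Finset.univ.filter (blk · = b)).image (cellLabel d₀ ε ∘ w)) (t := Finset.univ)
    (by simpa [ZMod.card] using Nat.lt_succ_of_le (Finset.card_image_le.trans hb))
  exact ⟨s, fun i hi his => hs (Finset.mem_image.2 ⟨i, by simpa using hi, his⟩)⟩

lemma isFreeShift_blockShift [Fintype ι] [DecidableEq β] {b : β}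
    (hb : (Finset.univ.filter (blk · = b)).card ≤ d₀) (w : ι → ℝ) :
    IsFreeShift d₀ ε blk w b (blockShift d₀ ε blk w b) :=
  Classical.epsilon_spec (exists_isFreeShift hb w)

lemma abs_blockRound_sub_le (hε : 0 < ε) {w μ : ι → ℝ} (hw : ∀ i, |w i - μ i| ≤ ε) (i : ι) :
    |blockRound d₀ ε blk w i - μ i| ≤ (2 * d₀ + 3) * ε :=
  abs_shiftedFloor_sub_le hε _ (hw i)

lemma blockRound_eq_of_blockShift_eq [Fintype ι] [DecidableEq β] (hε : 0 < ε)
    (hblk : ∀ b, (Finset.univ.filter (blk · = b)).card ≤ d₀) {w w' μ : ι → ℝ}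
    (hw : ∀ i, |w i - μ i| ≤ ε) (hw' : ∀ i, |w' i - μ i| ≤ ε)
    (h : blockShift d₀ ε blk w = blockShift d₀ ε blk w') :
    blockRound d₀ ε blk w = blockRound d₀ ε blk w' := by
  funext i
  have hfree := isFreeShift_blockShift (ε := ε) (hblk (blk i)) w i rfl
  have hfree' := isFreeShift_blockShift (ε := ε) (hblk (blk i)) w' i rfl
  rw [h] at hfree
  simp only [blockRound, h]
  exact shiftedFloor_eq_of_cellLabel_ne hε (hw i) (hw' i) hfree hfree'

lemma exists_finset_blockRound_mem [Fintype ι] [Fintype β] [DecidableEq β] (hε : 0 < ε)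
    (hblk : ∀ b, (Finset.univ.filter (blk · = b)).card ≤ d₀) (μ : ι → ℝ) :
    ∃ C : Finset (ι → ℝ), C.card ≤ (d₀ + 1) ^ Fintype.card β ∧
      ∀ w, (∀ i, |w i - μ i| ≤ ε) → blockRound d₀ ε blk w ∈ C := by
  obtain ⟨C, hcard, hC⟩ := exists_finset_card_le_of_factorsThrough
    (S := {w : ι → ℝ | ∀ i, |w i - μ i| ≤ ε}) (blockShift d₀ ε blk) (blockRound d₀ ε blk)
    fun w hw w' hw' => blockRound_eq_of_blockShift_eq hε hblk hw hw'
  refine ⟨C, by simpa [ZMod.card] using hcard, fun w hw => hC ⟨w, hw, rfl⟩⟩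

end BlockRounding

section FixedQuerySteward

variable {n k d : ℕ} {ε δ : ℝ}

def fixedQuerySteward (n k : ℕ) (R : (Fin d → ℝ) → Fin d → ℝ) : Steward n k d n :=
  ⟨fun Z _ => Z, fun _ _ W => R W⟩

variable (O : Owner n k d ε δ) (R : (Fin d → ℝ) → Fin d → ℝ)

noncomputable def responses (Z : Fin n → Bool) (i : ℕ) : List (Fin d → ℝ) :=
  (run O (fixedQuerySteward n k R) Z i).map Prod.fst

def Deviates (ys : List (Fin d → ℝ)) (Z : Fin n → Bool) : Prop :=
  ∃ j, |(O.act ys).1 Z j - (O.act ys).2 j| > ε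

lemma run_fixedQuerySteward_succ (Z : Fin n → Bool) (i : ℕ) :
    run O (fixedQuerySteward n k R) Z (i + 1) = run O (fixedQuerySteward n k R) Z i ++
      [(R ((O.act (responses O R Z i)).1 Z), (O.act (responses O R Z i)).1 Z,
        (O.act (responses O R Z i)).2)] := by
  simp [run, responses, fixedQuerySteward]

lemma responses_succ (Z : Fin n → Bool) (i : ℕ) :
    responses O R Z (i + 1) = responses O R Z i ++ [R ((O.act (responses O R Z i)).1 Z)] := by
  rw [responses, run_fixedQuerySteward_succ, List.map_append]
  rfl

variable (C : (Fin d → ℝ) → Finset (Fin d → ℝ))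

/-- The response histories that are possible while no function deviates, if every response to
a function concentrated at `μ` lies in `C μ`. -/
noncomputable def histories : ℕ → Finset (List (Fin d → ℝ))
  | 0 => {[]}
  | i + 1 => (histories i).biUnion fun ys => (C (O.act ys).2).image fun y => ys ++ [y]

lemma length_of_mem_histories {i : ℕ} {ys : List (Fin d → ℝ)} (h : ys ∈ histories O C i) :
    ys.length = i := by
  induction i generalizing ys with
  | zero => simp_all [histories]
  | succ i ih =>
    simp only [histories, Finset.mem_biUnion, Finset.mem_image] at h
    obtain ⟨ys', hys', y, -, rfl⟩ := h
    simp [ih hys']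

lemma card_histories_le {N : ℕ} (hC : ∀ μ, (C μ).card ≤ N) (i : ℕ) :
    (histories O C i).card ≤ N ^ i := by
  induction i with
  | zero => simp [histories]
  | succ i ih =>
    calc (histories O C (i + 1)).card
        ≤ ∑ ys ∈ histories O C i, ((C (O.act ys).2).image fun y => ys ++ [y]).card :=
          Finset.card_biUnion_le
      _ ≤ ∑ _ys ∈ histories O C i, N :=
          Finset.sum_le_sum fun ys _ => Finset.card_image_le.trans (hC _)
      _ ≤ N ^ (i + 1) := by
          rw [Finset.sum_const, smul_eq_mul, pow_succ]
          exact Nat.mul_le_mul_right N ih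

variable {O R C}

lemma abs_sub_le_of_not_deviates {ys : List (Fin d → ℝ)} {Z : Fin n → Bool}
    (h : ¬ Deviates O ys Z) : ∀ j, |(O.act ys).1 Z j - (O.act ys).2 j| ≤ ε := by
  simpa [Deviates] using h

lemma responses_mem_histories (hRC : ∀ w μ : Fin d → ℝ, (∀ j, |w j - μ j| ≤ ε) → R w ∈ C μ)
    {Z : Fin n → Bool} {i : ℕ} (hgood : ∀ i' < i, ¬ Deviates O (responses O R Z i') Z) :
    responses O R Z i ∈ histories O C i := by
  induction i with
  | zero => simp [responses, run, histories]
  | succ i ih =>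
    have hclose := abs_sub_le_of_not_deviates (hgood i i.lt_succ_self)
    rw [responses_succ, histories, Finset.mem_biUnion]
    exact ⟨_, ih fun i' hi' => hgood i' (hi'.trans i.lt_succ_self),
      Finset.mem_image_of_mem _ (hRC _ _ hclose)⟩

lemma abs_sub_le_of_mem_run {ε' : ℝ}
    (hR : ∀ w μ : Fin d → ℝ, (∀ j, |w j - μ j| ≤ ε) → ∀ j, |R w j - μ j| ≤ ε')
    {Z : Fin n → Bool} {i : ℕ} (hgood : ∀ i' < i, ¬ Deviates O (responses O R Z i') Z) :
    ∀ p ∈ run O (fixedQuerySteward n k R) Z i, ∀ j, |p.1 j - p.2.2 j| ≤ ε' := by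
  induction i with
  | zero => simp [run]
  | succ i ih =>
    have hclose := abs_sub_le_of_not_deviates (hgood i i.lt_succ_self)
    intro p hp
    rw [run_fixedQuerySteward_succ, List.mem_append, List.mem_singleton] at hp
    rcases hp with hp | rfl
    · exact ih (fun i' hi' => hgood i' (hi'.trans i.lt_succ_self)) p hp
    · exact hR _ _ hclose

theorem isSteward_fixedQuerySteward {ε' : ℝ} {N : ℕ} (hδ : 0 ≤ δ)
    (C : (Fin d → ℝ) → Finset (Fin d → ℝ)) (hC : ∀ μ, (C μ).card ≤ N)
    (hRC : ∀ w μ : Fin d → ℝ, (∀ j, |w j - μ j| ≤ ε) → R w ∈ C μ)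
    (hR : ∀ w μ : Fin d → ℝ, (∀ j, |w j - μ j| ≤ ε) → ∀ j, |R w j - μ j| ≤ ε') :
    IsSteward n k d n ε δ ε' ((∑ i ∈ Finset.range k, N ^ i : ℕ) * δ)
      (fixedQuerySteward n k R) := by
  intro O
  have hbad : ∀ Z, (∃ p ∈ run O (fixedQuerySteward n k R) Z k, ∃ j, |p.1 j - p.2.2 j| > ε') →
      ∃ i ∈ Finset.range k, ∃ ys ∈ histories O C i, Deviates O ys Z := by
    rintro Z ⟨p, hp, j, hj⟩
    have hdev : ∃ i, i < k ∧ Deviates O (responses O R Z i) Z := by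
      by_contra! hgood
      exact (abs_sub_le_of_mem_run hR hgood p hp j).not_gt hj
    obtain ⟨hlt, hfirst⟩ := Nat.find_spec hdev
    exact ⟨_, Finset.mem_range.2 hlt, _, responses_mem_histories hRC fun i' hi' h =>
      Nat.find_min hdev hi' ⟨hi'.trans hlt, h⟩, hfirst⟩
  calc pr _ ≤ pr fun Z => ∃ i ∈ Finset.range k, ∃ ys ∈ histories O C i, Deviates O ys Z :=
        pr_mono hbad
    _ ≤ ∑ i ∈ Finset.range k, ∑ ys ∈ histories O C i, pr (Deviates O ys) :=
        (pr_exists_le_sum _ _).trans (Finset.sum_le_sum fun i _ => pr_exists_le_sum _ _)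
    _ ≤ ∑ i ∈ Finset.range k, ((N ^ i : ℕ) : ℝ) * δ := by
        gcongr with i hi
        calc _ ≤ ∑ _ys ∈ histories O C i, δ := Finset.sum_le_sum fun ys hys =>
              O.conc ys (by rw [length_of_mem_histories O C hys]; exact Finset.mem_range.1 hi)
          _ ≤ _ := by
              rw [Finset.sum_const, nsmul_eq_mul]
              gcongr
              exact_mod_cast card_histories_le O C hC i
    _ = _ := by rw [← Finset.sum_mul, Nat.cast_sum]

end FixedQuerySteward

section ConsecutiveBlocks

def block (d₀ d : ℕ) (j : Fin d) : Fin (d / d₀ + 1) :=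
  ⟨j / d₀, Nat.lt_succ_of_le (Nat.div_le_div_right j.isLt.le)⟩

lemma card_filter_block_eq_le {d₀ d : ℕ} (hd₀ : 0 < d₀) (b : Fin (d / d₀ + 1)) :
    (Finset.univ.filter (block d₀ d · = b)).card ≤ d₀ := by
  have hdecomp : ∀ j : Fin d, block d₀ d j = b → d₀ * b + j % d₀ = j := fun j hj => by
    rw [← Nat.div_add_mod (j : ℕ) d₀, ← Fin.val_eq_of_eq hj]
    simp [block]
  simpa using Finset.card_le_card_of_injOn (t := Finset.range d₀) (fun j : Fin d => (j : ℕ) % d₀)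
    (fun j _ => Finset.mem_range.2 (Nat.mod_lt _ hd₀))
    fun a ha a' ha' h => Fin.ext <| by
      rw [← hdecomp a (by simpa using ha), ← hdecomp a' (by simpa using ha')]
      exact congrArg _ h

lemma sum_range_pow_le_two_rpow {d₀ d : ℕ} (hd₀ : 0 < d₀) (hdd : d₀ ≤ d) (k : ℕ) :
    ((∑ i ∈ Finset.range k, ((d₀ + 1) ^ (d / d₀ + 1)) ^ i : ℕ) : ℝ) ≤
      2 ^ (2 * k * d * Real.logb 2 (d₀ + 1) / d₀) := by
  have hbase : 2 ≤ (d₀ + 1) ^ (d / d₀ + 1) :=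
    (Nat.succ_le_succ hd₀).trans (Nat.le_self_pow (Nat.succ_ne_zero _) _)
  have hsum := (Nat.geomSum_lt (s := Finset.range k) (n := k) hbase
    fun i hi => Finset.mem_range.1 hi).le
  rw [← pow_mul] at hsum
  have hexp : (((d / d₀ + 1) * k : ℕ) : ℝ) ≤ 2 * k * d / d₀ := by
    rw [le_div_iff₀ (by exact_mod_cast hd₀)]
    have : (d / d₀ + 1) * d₀ ≤ 2 * d := by
      rw [add_mul, one_mul]
      linarith [Nat.div_mul_le_self d d₀]
    exact_mod_cast (by nlinarith : (d / d₀ + 1) * k * d₀ ≤ 2 * k * d)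
  have hpos : (0 : ℝ) < d₀ + 1 := by positivity
  calc ((∑ i ∈ Finset.range k, ((d₀ + 1) ^ (d / d₀ + 1)) ^ i : ℕ) : ℝ)
      ≤ ((d₀ : ℝ) + 1) ^ (((d / d₀ + 1) * k : ℕ) : ℝ) := by
        rw [Real.rpow_natCast]
        exact_mod_cast hsum
    _ ≤ ((d₀ : ℝ) + 1) ^ (2 * k * d / d₀ : ℝ) :=
        Real.rpow_le_rpow_of_exponent_le (by linarith) hexp
    _ = (2 ^ Real.logb 2 (d₀ + 1)) ^ (2 * k * d / d₀ : ℝ) := by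
        rw [Real.rpow_logb two_pos (by norm_num) hpos]
    _ = 2 ^ (2 * k * d * Real.logb 2 (d₀ + 1) / d₀) := by
        rw [← Real.rpow_mul zero_le_two]
        ring_nf

end ConsecutiveBlocks

theorem reuse_steward :
    ∃ C : ℝ, 0 < C ∧
      ∀ n k d d₀ : ℕ, 0 < n → 0 < k → 0 < d → 0 < d₀ → d₀ ≤ d →
        ∀ ε δ : ℝ, 0 < ε → 0 < δ →
          ∃ S : Steward n k d n,
            IsSteward n k d n ε δ ((3 * (d₀ : ℝ) + 5) * ε)
              ((2 : ℝ) ^ (C * k * d * Real.logb 2 ((d₀ : ℝ) + 1) / d₀) * δ) S := by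
  refine ⟨2, two_pos, fun n k d d₀ _ _ _ hd₀ hdd ε δ hε hδ => ?_⟩
  have hblk := card_filter_block_eq_le (d := d) hd₀
  choose C hC hRC using exists_finset_blockRound_mem (ε := ε) hε hblk
  refine ⟨fixedQuerySteward n k (blockRound d₀ ε (block d₀ d)), fun O => ?_⟩
  have hR : ∀ w μ : Fin d → ℝ, (∀ j, |w j - μ j| ≤ ε) →
      ∀ j, |blockRound d₀ ε (block d₀ d) w j - μ j| ≤ (3 * d₀ + 5) * ε :=
    fun w μ hw j => (abs_blockRound_sub_le hε hw j).trans (by nlinarith)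
  refine (isSteward_fixedQuerySteward hδ.le C hC (fun w μ => hRC μ w) hR O).trans ?_
  gcongr
  simpa [Fintype.card_fin] using sum_range_pow_le_two_rpow hd₀ hdd k
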